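/- Let N ≥ 1 and let U be an N×N unitary matrix. If φ is a point at which the maximum m_U of |Λ_U(θ)| is attained, then for every real θ with |θ - φ| ≤ 1/N one has |Λ_U(θ)| ≥ (1 - N·|θ - φ|) · m_U. -/

import Mathlib

open MeasureTheory Filter

/-- `Λ_U(θ) = det(1 - e^{-iθ} U)`, the characteristic polynomial of a unitary matrix `U`
on the unit circle. -/
noncomputable def Lam (N : ℕ) (U : Matrix.unitaryGroup (Fin N) ℂ) (θ : ℝ) : ℂ :=
  Matrix.det (1 - Complex.exp (-Complex.I * (θ : ℂ)) • (U : Matrix (Fin N) (Fin N) ℂ))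

/-- `m_U = max_θ |Λ_U(θ)|`. -/
noncomputable def mU (N : ℕ) (U : Matrix.unitaryGroup (Fin N) ℂ) : ℝ :=
  sSup ((fun θ : ℝ => ‖Lam N U θ‖) '' Set.Icc 0 (2 * Real.pi))

noncomputable def tp (N : ℕ) (c : ℕ → ℂ) (θ : ℝ) : ℂ :=
  ∑ k ∈ Finset.range (N+1), c k * Complex.exp (-(k:ℂ) * Complex.I * θ)

lemma exists_rep (N : ℕ) (U : Matrix.unitaryGroup (Fin N) ℂ) :
    ∃ c : ℕ → ℂ, ∀ θ : ℝ, Lam N U θ = tp N c θ := by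
  classical
  set M : Matrix (Fin N) (Fin N) (Polynomial ℂ) :=
    1 - (Polynomial.X : Polynomial ℂ) • (U : Matrix (Fin N) (Fin N) ℂ).map Polynomial.C with hM
  set P : Polynomial ℂ := M.det with hP
  have hentry : ∀ i j, M i j = (if i = j then 1 else 0) - Polynomial.X * Polynomial.C ((U : Matrix (Fin N) (Fin N) ℂ) i j) := by
    intro i j
    simp [hM, Matrix.sub_apply, Matrix.smul_apply, Matrix.map_apply, Matrix.one_apply, smul_eq_mul]
  have hdeg : P.natDegree ≤ N := by
    rw [hP, Matrix.det_apply']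
    apply Polynomial.natDegree_sum_le_of_forall_le
    intro σ _
    refine le_trans (Polynomial.natDegree_mul_le) ?_
    have h1 : (((Equiv.Perm.sign σ : ℤ) : Polynomial ℂ)).natDegree = 0 :=
      Polynomial.natDegree_intCast _
    rw [h1, zero_add]
    refine le_trans (Polynomial.natDegree_prod_le _ _) ?_
    have h2 : ∀ i : Fin N, (M (σ i) i).natDegree ≤ 1 := by
      intro i
      rw [hentry]
      refine le_trans (Polynomial.natDegree_sub_le _ _) ?_
      apply max_le
      · split_ifs <;> simp
      · exact le_trans (Polynomial.natDegree_mul_le) (by simp)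
    calc ∑ i : Fin N, (M (σ i) i).natDegree ≤ ∑ _i : Fin N, 1 :=
          Finset.sum_le_sum fun i _ => h2 i
      _ = N := by simp
  have heval : ∀ x : ℂ, P.eval x =
      Matrix.det (1 - x • (U : Matrix (Fin N) (Fin N) ℂ)) := by
    intro x
    have h0 : P.eval x = (Polynomial.evalRingHom x) P := rfl
    rw [h0, hP, RingHom.map_det]
    congr 1
    ext i j
    rw [RingHom.mapMatrix_apply, Matrix.map_apply, hentry]
    simp [Matrix.sub_apply, Matrix.smul_apply, Matrix.one_apply, apply_ite (Polynomial.eval x), smul_eq_mul]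
    ring
  refine ⟨fun k => P.coeff k, fun θ => ?_⟩
  have h1 : Lam N U θ = P.eval (Complex.exp (-Complex.I * θ)) := (heval _).symm
  rw [h1, Polynomial.eval_eq_sum_range' (lt_of_le_of_lt hdeg (Nat.lt_succ_self N))]
  unfold tp
  refine Finset.sum_congr rfl fun k _ => ?_
  congr 1
  rw [← Complex.exp_nat_mul]
  congr 1
  push_cast
  ring


noncomputable def tpd (N : ℕ) (c : ℕ → ℂ) (θ : ℝ) : ℂ :=
  ∑ k ∈ Finset.range (N+1), c k * (-(k:ℂ) * Complex.I) * Complex.exp (-(k:ℂ) * Complex.I * θ)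

noncomputable def dk (N : ℕ) (t : ℝ) : ℂ :=
  ∑ a ∈ Finset.range N, Complex.exp ((a:ℂ) * Complex.I * t)

lemma cont_cexp (z : ℂ) : Continuous fun t : ℝ => Complex.exp (z * t) :=
  Complex.continuous_exp.comp (continuous_const.mul Complex.continuous_ofReal)

lemma cont_tp (N : ℕ) (c : ℕ → ℂ) : Continuous (tp N c) := by
  unfold tp
  exact continuous_finset_sum _ fun k _ => continuous_const.mul (cont_cexp _)

lemma cont_dk (N : ℕ) : Continuous (dk N) := by
  unfold dk
  exact continuous_finset_sum _ fun a _ => cont_cexp _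

lemma tp_hasDeriv (N : ℕ) (c : ℕ → ℂ) (θ : ℝ) : HasDerivAt (tp N c) (tpd N c θ) θ := by
  unfold tp tpd
  apply HasDerivAt.fun_sum
  intro k _
  have h1 : HasDerivAt (fun z : ℂ => -(k:ℂ) * Complex.I * z) (-(k:ℂ) * Complex.I) (θ:ℂ) := by
    simpa using (hasDerivAt_id (θ:ℂ)).const_mul (-(k:ℂ) * Complex.I)
  have h2 := (h1.cexp).comp_ofReal
  have h3 := h2.const_mul (c k)
  convert h3 using 1
  · rfl
  ring

lemma int_exp (j : ℤ) : (∫ t in (0:ℝ)..(2*Real.pi), Complex.exp ((j:ℂ) * Complex.I * t))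
    = if j = 0 then ((2*Real.pi : ℝ):ℂ) else 0 := by
  split_ifs with h
  · rw [h]
    simp
  · have hc : (j:ℂ) * Complex.I ≠ 0 := mul_ne_zero (Int.cast_ne_zero.mpr h) Complex.I_ne_zero
    rw [integral_exp_mul_complex hc]
    have h1 : Complex.exp ((j:ℂ) * Complex.I * (2*(Real.pi:ℂ))) = 1 := by
      rw [← Complex.exp_int_mul_two_pi_mul_I j]
      congr 1
      push_cast
      ring
    simp [h1]


lemma conj_dk (N : ℕ) (t : ℝ) :
    (starRingEnd ℂ) (dk N t) = ∑ b ∈ Finset.range N, Complex.exp (-(b:ℂ) * Complex.I * t) := by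
  unfold dk
  rw [map_sum]
  refine Finset.sum_congr rfl fun b _ => ?_
  rw [← Complex.exp_conj]
  congr 1
  simp only [map_mul, Complex.conj_I, Complex.conj_ofReal, map_natCast]
  ring

lemma exp_merge (u a1 a2 a3 a4 b1 b2 : ℂ) (h : a1 + a2 + (a3 + a4) = b1 + b2) :
    u * Complex.exp a1 * Complex.exp a2 * (Complex.exp a3 * Complex.exp a4)
      = u * Complex.exp b1 * Complex.exp b2 := by
  have h1 : Complex.exp a1 * Complex.exp a2 * (Complex.exp a3 * Complex.exp a4)
      = Complex.exp b1 * Complex.exp b2 := by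
    rw [← Complex.exp_add, ← Complex.exp_add, ← Complex.exp_add, h, Complex.exp_add]
  calc u * Complex.exp a1 * Complex.exp a2 * (Complex.exp a3 * Complex.exp a4)
      = u * (Complex.exp a1 * Complex.exp a2 * (Complex.exp a3 * Complex.exp a4)) := by ring
    _ = u * (Complex.exp b1 * Complex.exp b2) := by rw [h1]
    _ = u * Complex.exp b1 * Complex.exp b2 := by ring

lemma count_lemma (N k : ℕ) (hk : k ≤ N) (v : ℂ) :
    ∑ a ∈ Finset.range N, ∑ b ∈ Finset.range N,
      (if ((k:ℤ) - N + a - b = 0) then v else 0) = (k:ℂ) * v := by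
  rw [Finset.sum_comm]
  have h1 : ∀ b a : ℕ, (((k:ℤ) - N + a - b = 0)) ↔ (a = b + (N - k)) := by
    intro b a
    omega
  simp only [h1]
  have h2 : ∀ b : ℕ, (∑ a ∈ Finset.range N, if a = b + (N - k) then v else 0)
      = if b + (N - k) ∈ Finset.range N then v else 0 := by
    intro b
    exact Finset.sum_ite_eq' _ _ _
  simp only [h2, Finset.mem_range]
  have h3 : ∀ b : ℕ, (b + (N - k) < N) ↔ b ∈ Finset.range k := by
    intro b
    simp only [Finset.mem_range]
    omega
  simp only [h3]
  rw [Finset.sum_ite_mem]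
  have h4 : Finset.range N ∩ Finset.range k = Finset.range k := by
    ext b
    simp only [Finset.mem_inter, Finset.mem_range]
    omega
  rw [h4, Finset.sum_const, Finset.card_range, nsmul_eq_mul]

lemma diag_lemma (N : ℕ) (v : ℂ) :
    ∑ a ∈ Finset.range N, ∑ b ∈ Finset.range N,
      (if ((a:ℤ) - b = 0) then v else 0) = (N:ℂ) * v := by
  have h1 : ∀ a b : ℕ, (((a:ℤ) - b = 0)) ↔ (b = a) := by intro a b; omega
  simp only [h1]
  have h2 : ∀ a : ℕ, (∑ b ∈ Finset.range N, if b = a then v else 0)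
      = if a ∈ Finset.range N then v else 0 := fun a => Finset.sum_ite_eq' _ _ _
  simp only [h2]
  rw [Finset.sum_ite_mem, Finset.inter_self, Finset.sum_const, Finset.card_range, nsmul_eq_mul]
lemma key_int (N : ℕ) (c : ℕ → ℂ) (θ : ℝ) :
    (∫ t in (0:ℝ)..(2*Real.pi),
        tp N c (θ - t) * Complex.exp (-(N:ℂ) * Complex.I * t) * (dk N t * (starRingEnd ℂ) (dk N t)))
      = ((2*Real.pi : ℝ):ℂ) *
          ∑ k ∈ Finset.range (N+1), (k:ℂ) * c k * Complex.exp (-(k:ℂ) * Complex.I * θ) := by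
  have hpt : ∀ t : ℝ,
      tp N c (θ - t) * Complex.exp (-(N:ℂ) * Complex.I * t) * (dk N t * (starRingEnd ℂ) (dk N t))
        = ∑ k ∈ Finset.range (N+1), ∑ a ∈ Finset.range N, ∑ b ∈ Finset.range N,
            (c k * Complex.exp (-(k:ℂ) * Complex.I * θ)) *
              Complex.exp ((((k:ℤ) - N + a - b : ℤ):ℂ) * Complex.I * t) := by
    intro t
    rw [conj_dk]
    unfold tp dk
    rw [Finset.sum_mul_sum]
    rw [Finset.sum_mul, Finset.sum_mul]
    refine Finset.sum_congr rfl fun k hk => ?_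
    rw [Finset.mul_sum]
    refine Finset.sum_congr rfl fun a _ => ?_
    rw [Finset.mul_sum]
    refine Finset.sum_congr rfl fun b _ => ?_
    exact exp_merge (c k) _ _ _ _ _ _ (by push_cast; ring)
  simp only [hpt]
  rw [intervalIntegral.integral_finset_sum]
  swap
  · intro k _
    apply Continuous.intervalIntegrable
    exact continuous_finset_sum _ fun _ _ => continuous_finset_sum _ fun _ _ =>
      continuous_const.mul (cont_cexp _)
  rw [Finset.mul_sum]
  refine Finset.sum_congr rfl fun k hk => ?_
  rw [intervalIntegral.integral_finset_sum]
  swap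
  · intro a _
    apply Continuous.intervalIntegrable
    exact continuous_finset_sum _ fun _ _ => continuous_const.mul (cont_cexp _)
  have hk' : k ≤ N := by
    have := Finset.mem_range.mp hk
    omega
  have hstep : ∀ a : ℕ,
      (∫ t in (0:ℝ)..(2*Real.pi), ∑ b ∈ Finset.range N,
          (c k * Complex.exp (-(k:ℂ) * Complex.I * θ)) *
            Complex.exp ((((k:ℤ) - N + a - b : ℤ):ℂ) * Complex.I * t))
        = ∑ b ∈ Finset.range N,
            (c k * Complex.exp (-(k:ℂ) * Complex.I * θ)) *
              (if ((k:ℤ) - N + a - b = 0) then ((2*Real.pi : ℝ):ℂ) else 0) := by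
    intro a
    rw [intervalIntegral.integral_finset_sum]
    swap
    · intro b _
      apply Continuous.intervalIntegrable
      exact continuous_const.mul (cont_cexp _)
    refine Finset.sum_congr rfl fun b _ => ?_
    rw [intervalIntegral.integral_const_mul, int_exp]
  simp only [hstep]
  simp only [← Finset.mul_sum]
  rw [count_lemma N k hk']
  ring
lemma mass_int (N : ℕ) :
    (∫ t in (0:ℝ)..(2*Real.pi), dk N t * (starRingEnd ℂ) (dk N t))
      = ((2*Real.pi : ℝ):ℂ) * N := by
  have hpt : ∀ t : ℝ, dk N t * (starRingEnd ℂ) (dk N t)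
      = ∑ a ∈ Finset.range N, ∑ b ∈ Finset.range N,
          Complex.exp ((((a:ℤ) - b : ℤ):ℂ) * Complex.I * t) := by
    intro t
    rw [conj_dk]
    unfold dk
    rw [Finset.sum_mul_sum]
    refine Finset.sum_congr rfl fun a _ => Finset.sum_congr rfl fun b _ => ?_
    rw [← Complex.exp_add]
    congr 1
    push_cast
    ring
  simp only [hpt]
  rw [intervalIntegral.integral_finset_sum]
  swap
  · intro a _
    apply Continuous.intervalIntegrable
    exact continuous_finset_sum _ fun _ _ => cont_cexp _
  have hstep : ∀ a : ℕ,
      (∫ t in (0:ℝ)..(2*Real.pi), ∑ b ∈ Finset.range N,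
          Complex.exp ((((a:ℤ) - b : ℤ):ℂ) * Complex.I * t))
        = ∑ b ∈ Finset.range N, (if ((a:ℤ) - b = 0) then ((2*Real.pi : ℝ):ℂ) else 0) := by
    intro a
    rw [intervalIntegral.integral_finset_sum]
    swap
    · intro b _
      apply Continuous.intervalIntegrable
      exact cont_cexp _
    exact Finset.sum_congr rfl fun b _ => int_exp _
  simp only [hstep]
  rw [diag_lemma N ((2*Real.pi : ℝ):ℂ)]
  ring
lemma tpd_bound (N : ℕ) (c : ℕ → ℂ) (m : ℝ) (hm : ∀ x : ℝ, ‖tp N c x‖ ≤ m) (θ : ℝ) :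
    ‖tpd N c θ‖ ≤ N * m := by
  set S : ℂ := ∑ k ∈ Finset.range (N+1), (k:ℂ) * c k * Complex.exp (-(k:ℂ) * Complex.I * θ)
    with hS
  have htpd : tpd N c θ = -Complex.I * S := by
    rw [hS]
    unfold tpd
    rw [Finset.mul_sum]
    exact Finset.sum_congr rfl fun k _ => by ring
  have hnormSq : ∀ t : ℝ, dk N t * (starRingEnd ℂ) (dk N t)
      = ((Complex.normSq (dk N t) : ℝ) : ℂ) := fun t => Complex.mul_conj _
  have hnormpt : ∀ t : ℝ,
      ‖tp N c (θ - t) * Complex.exp (-(N:ℂ) * Complex.I * t) * (dk N t * (starRingEnd ℂ) (dk N t))‖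
        = ‖tp N c (θ - t)‖ * Complex.normSq (dk N t) := by
    intro t
    rw [hnormSq t, norm_mul, norm_mul]
    have h1 : ‖Complex.exp (-(N:ℂ) * Complex.I * (t:ℂ))‖ = 1 := by
      rw [show (-(N:ℂ) * Complex.I * (t:ℂ)) = (((-((N:ℝ)) * t : ℝ)):ℂ) * Complex.I by
        push_cast; ring]
      rw [Complex.norm_exp_ofReal_mul_I]
    have h2 : ‖((Complex.normSq (dk N t) : ℝ) : ℂ)‖ = Complex.normSq (dk N t) := by
      rw [Complex.norm_real, Real.norm_eq_abs, abs_of_nonneg (Complex.normSq_nonneg _)]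
    rw [h1, h2, mul_one]
  have hsq_real : (∫ t in (0:ℝ)..(2*Real.pi), Complex.normSq (dk N t)) = 2*Real.pi*N := by
    have h3 : (∫ t in (0:ℝ)..(2*Real.pi), dk N t * (starRingEnd ℂ) (dk N t))
        = (((∫ t in (0:ℝ)..(2*Real.pi), Complex.normSq (dk N t)) : ℝ) : ℂ) := by
      rw [← intervalIntegral.integral_ofReal]
      exact intervalIntegral.integral_congr fun t _ => hnormSq t
    rw [mass_int] at h3
    have h4 : ((2*Real.pi*N : ℝ) : ℂ)
        = (((∫ t in (0:ℝ)..(2*Real.pi), Complex.normSq (dk N t)) : ℝ) : ℂ) := by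
      rw [← h3]
      push_cast
      ring
    exact (Complex.ofReal_injective h4).symm
  have hcont1 : Continuous fun t : ℝ => ‖tp N c (θ - t)‖ :=
    ((cont_tp N c).comp (continuous_const.sub continuous_id)).norm
  have hcont2 : Continuous fun t : ℝ => Complex.normSq (dk N t) :=
    Complex.continuous_normSq.comp (cont_dk N)
  have hm0 : 0 ≤ m := le_trans (norm_nonneg _) (hm 0)
  have hb : ‖((2*Real.pi : ℝ):ℂ) * S‖ ≤ m * (2*Real.pi*N) := by
    rw [← key_int N c θ]
    refine le_trans (intervalIntegral.norm_integral_le_integral_norm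
      (by positivity : (0:ℝ) ≤ 2*Real.pi)) ?_
    rw [intervalIntegral.integral_congr
      (g := fun t => ‖tp N c (θ - t)‖ * Complex.normSq (dk N t)) (fun t _ => hnormpt t)]
    have hmono : (∫ t in (0:ℝ)..(2*Real.pi), ‖tp N c (θ - t)‖ * Complex.normSq (dk N t))
        ≤ ∫ t in (0:ℝ)..(2*Real.pi), m * Complex.normSq (dk N t) := by
      apply intervalIntegral.integral_mono_on (by positivity)
      · exact (hcont1.mul hcont2).intervalIntegrable _ _
      · exact (continuous_const.mul hcont2).intervalIntegrable _ _
      · intro t _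
        exact mul_le_mul_of_nonneg_right (hm _) (Complex.normSq_nonneg _)
    refine le_trans hmono ?_
    rw [intervalIntegral.integral_const_mul, hsq_real]
  have hnormS : ‖S‖ ≤ N * m := by
    have h2π : ‖((2*Real.pi : ℝ):ℂ)‖ = 2*Real.pi := by
      rw [Complex.norm_real, Real.norm_eq_abs, abs_of_pos Real.two_pi_pos]
    rw [norm_mul, h2π] at hb
    nlinarith [Real.two_pi_pos, norm_nonneg S]
  rw [htpd, norm_mul]
  simpa using hnormS
lemma tp_lip (N : ℕ) (c : ℕ → ℂ) (m : ℝ) (hm : ∀ x : ℝ, ‖tp N c x‖ ≤ m) (θ φ : ℝ) :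
    ‖tp N c θ - tp N c φ‖ ≤ ((N:ℝ) * m) * ‖θ - φ‖ :=
  Convex.norm_image_sub_le_of_norm_hasDerivWithin_le
    (f := tp N c) (f' := tpd N c) (s := Set.univ)
    (fun x _ => (tp_hasDeriv N c x).hasDerivWithinAt)
    (fun x _ => tpd_bound N c m hm x) convex_univ (Set.mem_univ φ) (Set.mem_univ θ)

/-- If `φ` is a point where the maximum `m_U` of `|Λ_U(θ)|` is attained, then for every `θ`
with `|θ - φ| ≤ 1/N` one has `|Λ_U(θ)| ≥ (1 - N·|θ - φ|)·m_U`. -/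
theorem Lam_lower_bound_near_max (N : ℕ) (hN : 1 ≤ N) (U : Matrix.unitaryGroup (Fin N) ℂ)
    (φ : ℝ) (hφ : ‖Lam N U φ‖ = mU N U) :
    ∀ θ : ℝ, |θ - φ| ≤ 1 / (N : ℝ) →
      (1 - (N : ℝ) * |θ - φ|) * mU N U ≤ ‖Lam N U θ‖ := by
  intro θ hθ
  obtain ⟨c, hrep⟩ := exists_rep N U
  have hper : Function.Periodic (Lam N U) (2*Real.pi) := by
    intro x
    unfold Lam
    have hexp : Complex.exp (-Complex.I * ((x + 2*Real.pi : ℝ):ℂ))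
        = Complex.exp (-Complex.I * (x:ℂ)) := by
      rw [show (-Complex.I * ((x + 2*Real.pi : ℝ):ℂ))
          = -Complex.I * (x:ℂ) + -(2*(Real.pi:ℂ)*Complex.I) by push_cast; ring,
        Complex.exp_add, Complex.exp_neg]
      rw [show (2*(Real.pi:ℂ)*Complex.I) = 2*(Real.pi:ℝ)*Complex.I by push_cast; ring]
      rw [Complex.exp_two_pi_mul_I]
      simp
    rw [hexp]
  have hcont : Continuous fun x : ℝ => ‖Lam N U x‖ := by
    have h1 : (Lam N U) = tp N c := funext hrep
    simp only [h1]
    exact continuous_norm.comp (cont_tp N c)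
  have hbdd : BddAbove ((fun θ : ℝ => ‖Lam N U θ‖) '' Set.Icc 0 (2 * Real.pi)) :=
    isCompact_Icc.bddAbove_image hcont.continuousOn
  have hub : ∀ x : ℝ, ‖Lam N U x‖ ≤ mU N U := by
    intro x
    obtain ⟨y, hy, hxy⟩ := hper.exists_mem_Ico₀ Real.two_pi_pos x
    calc ‖Lam N U x‖ = ‖Lam N U y‖ := by rw [hxy]
      _ ≤ mU N U := le_csSup hbdd ⟨y, Set.Ico_subset_Icc_self hy, rfl⟩
  have hm : ∀ x : ℝ, ‖tp N c x‖ ≤ mU N U := fun x => by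
    rw [← hrep x]
    exact hub x
  have hlip := tp_lip N c (mU N U) hm θ φ
  rw [← hrep θ, ← hrep φ] at hlip
  have h1 := norm_sub_norm_le (Lam N U φ) (Lam N U θ)
  rw [norm_sub_rev] at h1
  have hφ' : ‖Lam N U φ‖ = mU N U := by exact hφ
  rw [Real.norm_eq_abs] at hlip
  have hexpand : (1 - (N:ℝ) * |θ - φ|) * mU N U = mU N U - (N:ℝ) * mU N U * |θ - φ| := by ring
  linarith
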